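/- arXiv:1603.03762 — 4 statements merged into one kernel-verified Lean document; each statement's English description precedes it below -/
import Mathlib

section
/- Fix real numbers $y_1 < \cdots < y_m$ with $m \geq 2$ and let $z_j(y_1,\ldots,y_m)$ denote the unique zero of $p'(x)$ in $(y_j, y_{j+1})$, where $p(x) = \prod_{i=1}^m (x - y_i)$. Then each $z_j$ is a strictly increasing function of each variable $y_k$: if $y_k$ is replaced by $y_k' $ with $y_k < y_k'$ and the ordering of the zeros is preserved, then every critical point $z_j$ strictly increases. -/
open Polynomial Set

lemma markov_derivative_finset_prod {ι : Type*} [DecidableEq ι] (s : Finset ι) (f : ι → ℝ[X]) :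
    Polynomial.derivative (∏ i ∈ s, f i)
      = ∑ i ∈ s, (∏ j ∈ s.erase i, f j) * Polynomial.derivative (f i) := by
  induction s using Finset.induction_on with
  | empty => simp
  | @insert a s ha ih =>
    rw [Finset.prod_insert ha, derivative_mul, Finset.sum_insert ha,
      Finset.erase_insert ha, ih, Finset.mul_sum, mul_comm (derivative (f a))]
    congr 1
    apply Finset.sum_congr rfl
    intro i hi
    have hai : a ≠ i := fun e => ha (e ▸ hi)
    rw [Finset.erase_insert_of_ne hai,
      Finset.prod_insert (fun hh => ha (Finset.mem_of_mem_erase hh)), mul_assoc]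

lemma markov_sum_inv_aux (m : ℕ) (y : Fin m → ℝ) (z : ℝ) (hz : ∀ i, z ≠ y i)
    (hcrit : (Polynomial.derivative (∏ i, (X - C (y i)))).eval z = 0) :
    ∑ i, (z - y i)⁻¹ = 0 := by
  have hne : ∀ i : Fin m, z - y i ≠ 0 := fun i => sub_ne_zero.mpr (hz i)
  have hd : (Polynomial.derivative (∏ i, (X - C (y i)))).eval z
      = ∑ i, ∏ j ∈ Finset.univ.erase i, (z - y j) := by
    rw [markov_derivative_finset_prod]
    simp [Polynomial.eval_finset_sum, Polynomial.eval_prod]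
  have key : ∀ i : Fin m, (z - y i)⁻¹
      = (∏ j, (z - y j))⁻¹ * ∏ j ∈ Finset.univ.erase i, (z - y j) := by
    intro i
    have hpe : (∏ j ∈ Finset.univ.erase i, (z - y j)) ≠ 0 :=
      Finset.prod_ne_zero_iff.mpr fun j _ => hne j
    rw [← Finset.prod_erase_mul _ _ (Finset.mem_univ i), mul_inv,
      mul_comm ((∏ j ∈ Finset.univ.erase i, (z - y j))⁻¹), mul_assoc,
      inv_mul_cancel₀ hpe, mul_one]
  calc ∑ i, (z - y i)⁻¹ = (∏ j, (z - y j))⁻¹ * ∑ i, ∏ j ∈ Finset.univ.erase i, (z - y j) := by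
        rw [Finset.mul_sum]; exact Finset.sum_congr rfl fun i _ => key i
    _ = 0 := by rw [← hd, hcrit, mul_zero]

lemma markov_inv_lt_inv (u v : ℝ) (hs : 0 < u ∨ v < 0) (huv : u < v) : v⁻¹ < u⁻¹ := by
  rcases hs with h0 | h0
  · exact inv_strictAnti₀ h0 huv
  · have hu : u < 0 := huv.trans h0
    rw [inv_lt_inv_of_neg h0 hu]
    exact huv

lemma markov_inv_le_inv (u v : ℝ) (hs : 0 < u ∨ v < 0) (huv : u ≤ v) : v⁻¹ ≤ u⁻¹ := by
  rcases eq_or_lt_of_le huv with rfl | hlt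
  · exact le_refl _
  · exact (markov_inv_lt_inv u v hs hlt).le

/-- Markov's lemma: each critical point of a polynomial with simple real zeros is a
strictly increasing function of each of the zeros, as long as the ordering of the
zeros is preserved. -/
theorem markov_critical_points_monotone
    (m : ℕ) (hm : 2 ≤ m) (y y' : Fin m → ℝ)
    (hy : StrictMono y) (hy' : StrictMono y')
    (k : Fin m) (hk : y k < y' k) (hother : ∀ i, i ≠ k → y' i = y i)
    (j : Fin m) (h : (j : ℕ) + 1 < m)
    (z z' : ℝ)
    (hz : z ∈ Set.Ioo (y j) (y ⟨(j : ℕ) + 1, h⟩))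
    (hzcrit : (Polynomial.derivative (∏ i, (Polynomial.X - Polynomial.C (y i)))).eval z = 0)
    (hz' : z' ∈ Set.Ioo (y' j) (y' ⟨(j : ℕ) + 1, h⟩))
    (hz'crit : (Polynomial.derivative (∏ i, (Polynomial.X - Polynomial.C (y' i)))).eval z' = 0) :
    z < z' := by
  set j1 : Fin m := ⟨(j : ℕ) + 1, h⟩ with hj1
  -- basic position facts
  have hylt : ∀ i : Fin m, (i : ℕ) ≤ (j : ℕ) → y i < z := fun i hi =>
    lt_of_le_of_lt (hy.monotone (Fin.le_def.mpr hi)) hz.1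
  have hygt : ∀ i : Fin m, (j : ℕ) < (i : ℕ) → z < y i := fun i hi =>
    lt_of_lt_of_le hz.2 (hy.monotone (Fin.le_def.mpr (by simpa [hj1] using hi)))
  have hy'lt : ∀ i : Fin m, (i : ℕ) ≤ (j : ℕ) → y' i < z' := fun i hi =>
    lt_of_le_of_lt (hy'.monotone (Fin.le_def.mpr hi)) hz'.1
  have hy'gt : ∀ i : Fin m, (j : ℕ) < (i : ℕ) → z' < y' i := fun i hi =>
    lt_of_lt_of_le hz'.2 (hy'.monotone (Fin.le_def.mpr (by simpa [hj1] using hi)))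
  have hle : ∀ i : Fin m, y i ≤ y' i := by
    intro i
    by_cases hik : i = k
    · subst hik; exact hk.le
    · rw [hother i hik]
  have hzney : ∀ i : Fin m, z ≠ y i := by
    intro i
    rcases le_or_gt (i : ℕ) (j : ℕ) with hij | hij
    · exact (hylt i hij).ne'
    · exact (hygt i hij).ne
  have hz'ney' : ∀ i : Fin m, z' ≠ y' i := by
    intro i
    rcases le_or_gt (i : ℕ) (j : ℕ) with hij | hij
    · exact (hy'lt i hij).ne'
    · exact (hy'gt i hij).ne
  have hgz : ∑ i, (z - y i)⁻¹ = 0 := markov_sum_inv_aux m y z hzney hzcrit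
  have hgz' : ∑ i, (z' - y' i)⁻¹ = 0 := markov_sum_inv_aux m y' z' hz'ney' hz'crit
  by_cases hcase : (k : ℕ) ≤ (j : ℕ) ∧ z ≤ y' k
  · -- trivial case: y' k jumped above z
    have h1 : y' k ≤ y' j := hy'.monotone (Fin.le_def.mpr hcase.1)
    have := hz'.1
    linarith [hcase.2]
  · push_neg at hcase
    have hky' : ∀ i : Fin m, (i : ℕ) ≤ (j : ℕ) → y' i < z := by
      intro i hi
      by_cases hik : i = k
      · subst hik; exact hcase hi
      · rw [hother i hik]; exact hylt i hi
    have hky'2 : ∀ i : Fin m, (j : ℕ) < (i : ℕ) → z < y' i := fun i hi =>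
      lt_of_lt_of_le (hygt i hi) (hle i)
    -- the logarithmic-derivative sum at z with the new zeros is positive
    have hdiff : ∑ i, ((z - y' i)⁻¹ - (z - y i)⁻¹) = (z - y' k)⁻¹ - (z - y k)⁻¹ := by
      apply Finset.sum_eq_single
      · intro i _ hik
        rw [hother i hik]; ring
      · intro hkmem
        exact absurd (Finset.mem_univ k) hkmem
    have hkterm : (z - y k)⁻¹ < (z - y' k)⁻¹ := by
      apply markov_inv_lt_inv
      · rcases le_or_gt (k : ℕ) (j : ℕ) with hkj | hkj
        · left; have := hky' k hkj; linarith
        · right; have := hygt k hkj; linarith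
      · linarith
    have hpos : 0 < ∑ i, (z - y' i)⁻¹ := by
      have hsplit : ∑ i, (z - y' i)⁻¹
          = ∑ i, (z - y i)⁻¹ + ∑ i, ((z - y' i)⁻¹ - (z - y i)⁻¹) := by
        rw [Finset.sum_sub_distrib]; ring
      rw [hsplit, hgz, hdiff]
      linarith
    -- conclude by monotonicity of the sum in z
    by_contra hcon
    push_neg at hcon
    have hterm : ∀ i : Fin m, (z - y' i)⁻¹ ≤ (z' - y' i)⁻¹ := by
      intro i
      apply markov_inv_le_inv
      · rcases le_or_gt (i : ℕ) (j : ℕ) with hij | hij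
        · left; have := hy'lt i hij; linarith
        · right; have := hky'2 i hij; linarith
      · linarith
    have hsumle : ∑ i, (z - y' i)⁻¹ ≤ ∑ i, (z' - y' i)⁻¹ :=
      Finset.sum_le_sum fun i _ => hterm i
    rw [hgz'] at hsumle
    linarith
end

section
/- Let $a < 0$, $A, B, C > 0$, and for $C' \geq C$ let $x_1(C')$ and $x_2(C')$ denote the unique zeros in $(a,0)$ and $(0,1)$ respectively of $f_{C'}(x) = A/(x - a) + B/x - C'/(1 - x)$. Then $x_1$ and $x_2$ are strictly decreasing functions of $C'$. -/
open Set

/-! Each of the three terms of `f_{C'}` is antitone on either interval and `B / x` is strictly so,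
hence `f_{C'}` is strictly decreasing there. Raising `C'` lowers `f_{C'}` pointwise on `x < 1`,
so `f_{C'+δ}(x) < f_{C'}(x) = 0 = f_{C'+δ}(x')` at the old and new zeros `x`, `x'`,
which forces `x' < x`. -/

lemma div_lt_div_of_lt_of_mul_pos {K : Type*} [Field K] [LinearOrder K] [IsStrictOrderedRing K]
    {b x y : K} (hb : 0 < b) (hxy : x < y) (hpos : 0 < x * y) : b / y < b / x := by
  have hx : x ≠ 0 := left_ne_zero_of_mul hpos.ne'
  have hy : y ≠ 0 := right_ne_zero_of_mul hpos.ne'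
  calc b / y = b * x / (x * y) := by field_simp
    _ < b * y / (x * y) := by gcongr
    _ = b / x := by field_simp

noncomputable def angelescoField (a A B C x : ℝ) : ℝ := A / (x - a) + B / x - C / (1 - x)

section

variable {a A B C : ℝ}

lemma angelescoField_lt_of_lt (hA : 0 ≤ A) (hB : 0 < B) (hC : 0 ≤ C) {x y : ℝ}
    (hax : a < x) (hxy : x < y) (hy : y < 1) (hpos : 0 < x * y) :
    angelescoField a A B C y < angelescoField a A B C x := by
  have hAterm : A / (y - a) ≤ A / (x - a) :=
    div_le_div_of_nonneg_left hA (by linarith) (by linarith)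
  have hBterm : B / y < B / x := div_lt_div_of_lt_of_mul_pos hB hxy hpos
  have hCterm : C / (1 - x) ≤ C / (1 - y) :=
    div_le_div_of_nonneg_left hC (by linarith) (by linarith)
  unfold angelescoField
  linarith

lemma strictAntiOn_angelescoField_Ioo_neg (hA : 0 ≤ A) (hB : 0 < B) (hC : 0 ≤ C) :
    StrictAntiOn (angelescoField a A B C) (Ioo a 0) := fun _ hx _ hy hxy =>
  angelescoField_lt_of_lt hA hB hC hx.1 hxy (hy.2.trans one_pos) (mul_pos_of_neg_of_neg hx.2 hy.2)

lemma strictAntiOn_angelescoField_Ioo_pos (ha : a ≤ 0) (hA : 0 ≤ A) (hB : 0 < B) (hC : 0 ≤ C) :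
    StrictAntiOn (angelescoField a A B C) (Ioo 0 1) := fun _ hx _ hy hxy =>
  angelescoField_lt_of_lt hA hB hC (ha.trans_lt hx.1) hxy hy.2 (mul_pos hx.1 hy.1)

lemma angelescoField_lt_of_param_lt {C' x : ℝ} (hCC' : C < C') (hx : x < 1) :
    angelescoField a A B C' x < angelescoField a A B C x := by
  have : C / (1 - x) < C' / (1 - x) := div_lt_div_of_pos_right hCC' (by linarith)
  unfold angelescoField
  linarith

lemma lt_of_angelescoField_eq_zero {C' x x' : ℝ} {s : Set ℝ}
    (hanti : StrictAntiOn (angelescoField a A B C') s) (hCC' : C < C')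
    (hx : x ∈ s) (hx1 : x < 1) (hx' : x' ∈ s)
    (hfx : angelescoField a A B C x = 0) (hfx' : angelescoField a A B C' x' = 0) : x' < x :=
  (hanti.lt_iff_gt hx hx').mp <| by
    rw [hfx']
    exact hfx ▸ angelescoField_lt_of_param_lt hCC' hx1

end

/-- The zeros of `A/(x-a) + B/x - C'/(1-x)` in `(a,0)` and `(0,1)` are strictly
decreasing functions of the parameter `C'`. -/
theorem jacobi_angelesco_base_monotone_gamma
    (a A B C δ : ℝ) (ha : a < 0) (hA : 0 < A) (hB : 0 < B) (hC : 0 < C) (hδ : 0 < δ)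
    (x₁ x₁' x₂ x₂' : ℝ)
    (hx₁ : x₁ ∈ Set.Ioo a 0) (hfx₁ : A / (x₁ - a) + B / x₁ - C / (1 - x₁) = 0)
    (hx₁' : x₁' ∈ Set.Ioo a 0) (hfx₁' : A / (x₁' - a) + B / x₁' - (C + δ) / (1 - x₁') = 0)
    (hx₂ : x₂ ∈ Set.Ioo (0 : ℝ) 1) (hfx₂ : A / (x₂ - a) + B / x₂ - C / (1 - x₂) = 0)
    (hx₂' : x₂' ∈ Set.Ioo (0 : ℝ) 1)
    (hfx₂' : A / (x₂' - a) + B / x₂' - (C + δ) / (1 - x₂') = 0) :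
    x₁' < x₁ ∧ x₂' < x₂ := by
  have hCδ : C < C + δ := lt_add_of_pos_right C hδ
  have hCδ_nonneg : 0 ≤ C + δ := by linarith
  exact ⟨lt_of_angelescoField_eq_zero (strictAntiOn_angelescoField_Ioo_neg hA.le hB hCδ_nonneg)
      hCδ hx₁ (hx₁.2.trans one_pos) hx₁' hfx₁ hfx₁',
    lt_of_angelescoField_eq_zero (strictAntiOn_angelescoField_Ioo_pos ha.le hA.le hB hCδ_nonneg)
      hCδ hx₂ hx₂.2 hx₂' hfx₂ hfx₂'⟩
end

section
/- Let $a < 0$, let $w_1$ be a positive continuous weight on $(a, 0)$ and $w_2$ a positive continuous weight on $(0, 1)$, and let $P$ be a nonzero polynomial of degree at most $n + m$ satisfying $\int_a^0 x^k P(x) w_1(x)\,dx = 0$ for $k = 0, \ldots, n-1$ and $\int_0^1 x^k P(x) w_2(x)\,dx = 0$ for $k = 0, \ldots, m-1$. Then $P$ has at least $n$ sign changes in $(a, 0)$ and at least $m$ sign changes in $(0, 1)$; in particular if $\deg P = n + m$ then $P$ has exactly $n$ simple zeros in $(a, 0)$ and exactly $m$ simple zeros in $(0, 1)$. -/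
/-! If `P` had fewer than `n` sign changes in `(a, 0)`, the product `Q` of the `X - r` over them
would have degree `< n`, so `∫ Q P w₁ = 0` by orthogonality; but all roots of `Q P` in `(a, 0)`
have even multiplicity, so `Q P` keeps one sign there and the integral cannot vanish. Points of
alternating sign are then picked between consecutive sign changes. When `deg P = n + m`, the
`n + m` sign changes exhaust the degree, so they are all the roots and all are simple. -/

open Set MeasureTheory intervalIntegral Polynomial

open Finset in
theorem Polynomial.sum_rootMultiplicity_le_natDegree {R : Type*} [CommRing R] [IsDomain R]
    (P : R[X]) (T : Finset R) : ∑ r ∈ T, P.rootMultiplicity r ≤ P.natDegree := by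
  classical
  calc ∑ r ∈ T, P.rootMultiplicity r = ∑ r ∈ T, P.roots.count r := by simp only [count_roots]
    _ ≤ ∑ r ∈ T ∪ P.roots.toFinset, P.roots.count r := sum_le_sum_of_subset subset_union_left
    _ = Multiset.card P.roots := Multiset.sum_count_eq_card fun a ha ↦
        mem_union_right _ (Multiset.mem_toFinset.mpr ha)
    _ ≤ P.natDegree := P.card_roots'

open Finset in
theorem Polynomial.mem_and_rootMultiplicity_eq_one_of_natDegree_le_card {R : Type*} [CommRing R]
    [IsDomain R] {P : R[X]} (hP : P ≠ 0) {T : Finset R} (hT : ∀ r ∈ T, P.IsRoot r)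
    (hdeg : P.natDegree ≤ #T) {r : R} (hr : P.IsRoot r) : r ∈ T ∧ P.rootMultiplicity r = 1 := by
  classical
  have one_le : ∀ x, P.IsRoot x → 1 ≤ P.rootMultiplicity x := fun x hx ↦
    (rootMultiplicity_pos hP).mpr hx
  have card_le_sum : ∀ U : Finset R, (∀ x ∈ U, P.IsRoot x) → #U ≤ ∑ x ∈ U, P.rootMultiplicity x :=
    fun U hU ↦ by simpa using card_nsmul_le_sum U _ 1 fun x hx ↦ one_le x (hU x hx)
  have hrT : r ∈ T := by
    by_contra hrT
    have := card_le_sum (insert r T) fun x hx ↦ (mem_insert.mp hx).elim (· ▸ hr) (hT x)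
    rw [card_insert_of_notMem hrT] at this
    linarith [P.sum_rootMultiplicity_le_natDegree (insert r T)]
  have hsum : ∑ x ∈ T, P.rootMultiplicity x = ∑ x ∈ T, 1 :=
    le_antisymm (by simpa using (P.sum_rootMultiplicity_le_natDegree T).trans hdeg)
      (sum_le_sum fun x hx ↦ one_le x (hT x hx))
  exact ⟨hrT, ((sum_eq_sum_iff_of_le fun x hx ↦ one_le x (hT x hx)).mp hsum.symm r hrT).symm⟩

theorem Polynomial.eval_mul_eval_nonneg_of_even_rootMultiplicity {s : Set ℝ} (hs : s.OrdConnected)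
    {g : ℝ[X]} (hg : g ≠ 0) (heven : ∀ r ∈ s, Even (g.rootMultiplicity r)) {x y : ℝ}
    (hx : x ∈ s) (hy : y ∈ s) : 0 ≤ g.eval x * g.eval y := by
  classical
  induction hd : g.natDegree using Nat.strong_induction_on generalizing g with
  | _ d ih =>
  by_cases hroot : ∃ r ∈ s, g.IsRoot r
  · obtain ⟨r, hrs, hr⟩ := hroot
    -- the multiplicity at `r` is even and positive, so `(X - r) ^ 2` splits off
    have h2 : 2 ≤ g.rootMultiplicity r := by
      obtain ⟨k, hk⟩ := heven r hrs
      have := (rootMultiplicity_pos hg).mpr hr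
      omega
    obtain ⟨h, rfl⟩ := (le_rootMultiplicity_iff hg).mp h2
    have hh : h ≠ 0 := right_ne_zero_of_mul hg
    have hdeg : h.natDegree < d := by
      rw [← hd, natDegree_mul (pow_ne_zero _ (X_sub_C_ne_zero r)) hh, natDegree_pow,
        natDegree_X_sub_C]
      omega
    have heven_h : ∀ r' ∈ s, Even (h.rootMultiplicity r') := by
      intro r' hr'
      have := heven r' hr'
      rw [rootMultiplicity_mul hg, sq,
        rootMultiplicity_mul (by simpa [sq] using left_ne_zero_of_mul hg),
        rootMultiplicity_X_sub_C] at this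
      exact (Nat.even_add.mp this).mp ⟨_, rfl⟩
    calc 0 ≤ ((x - r) * (y - r)) ^ 2 * (h.eval x * h.eval y) :=
          mul_nonneg (sq_nonneg _) (ih _ hdeg hh heven_h rfl)
      _ = _ := by simp only [eval_mul, eval_pow, eval_sub, eval_X, eval_C]; ring
  · push Not at hroot
    by_contra! hneg
    have h0 : (0 : ℝ) ∈ uIcc (g.eval x) (g.eval y) := by
      rcases mul_neg_iff.mp hneg with ⟨h1, h2⟩ | ⟨h1, h2⟩
      · exact mem_uIcc.mpr (Or.inr ⟨h2.le, h1.le⟩)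
      · exact mem_uIcc.mpr (Or.inl ⟨h1.le, h2.le⟩)
    obtain ⟨z, hz, hgz⟩ := intermediate_value_uIcc g.continuous.continuousOn h0
    exact hroot z (hs.uIcc_subset hx hy hz) hgz

theorem Polynomial.exists_mem_Ioo_eval_ne_zero {P : ℝ[X]} (hP : P ≠ 0) {a b : ℝ} (hab : a < b) :
    ∃ x ∈ Ioo a b, P.eval x ≠ 0 :=
  ((Ioo_infinite hab).sdiff (finite_setOfPred_isRoot hP)).nonempty

theorem Polynomial.eval_mul_eval_neg_of_odd_rootMultiplicity {P : ℝ[X]} {x r y : ℝ}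
    (hxr : x < r) (hry : r < y) (hx : P.eval x ≠ 0) (hy : P.eval y ≠ 0)
    (hr : Odd (P.rootMultiplicity r))
    (heven : ∀ r' ∈ Icc x y, r' ≠ r → Even (P.rootMultiplicity r')) :
    P.eval x * P.eval y < 0 := by
  classical
  have hP : P ≠ 0 := by rintro rfl; exact hx eval_zero
  have hg : (X - C r) * P ≠ 0 := mul_ne_zero (X_sub_C_ne_zero r) hP
  -- multiplying by `X - r` makes every multiplicity on `[x, y]` even
  have hsign := eval_mul_eval_nonneg_of_even_rootMultiplicity ordConnected_Icc hg
    (fun r' hr' ↦ by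
      rw [rootMultiplicity_mul hg, rootMultiplicity_X_sub_C]
      split_ifs with h
      · exact h ▸ odd_one.add_odd hr
      · simpa using heven r' hr' h)
    (left_mem_Icc.mpr (hxr.trans hry).le) (right_mem_Icc.mpr (hxr.trans hry).le)
  have hfactor : ((X - C r) * P).eval x * ((X - C r) * P).eval y =
      ((x - r) * (y - r)) * (P.eval x * P.eval y) := by
    simp only [eval_mul, eval_sub, eval_X, eval_C]; ring
  rw [hfactor] at hsign
  exact (nonpos_of_mul_nonneg_right hsign
    (mul_neg_of_neg_of_pos (sub_neg.mpr hxr) (sub_pos.mpr hry))).lt_of_ne (mul_ne_zero hx hy)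

open Classical in
/-- The points of `s` at which `P` changes sign. -/
noncomputable def Polynomial.oddRootsIn {R : Type*} [CommRing R] [IsDomain R] (P : R[X])
    (s : Set R) : Finset R :=
  P.roots.toFinset.filter fun r ↦ r ∈ s ∧ Odd (P.rootMultiplicity r)

theorem Polynomial.mem_oddRootsIn {R : Type*} [CommRing R] [IsDomain R] {P : R[X]} {s : Set R}
    {r : R} : r ∈ P.oddRootsIn s ↔ r ∈ s ∧ Odd (P.rootMultiplicity r) := by
  simp only [oddRootsIn, Finset.mem_filter, Multiset.mem_toFinset, mem_roots',
    and_iff_right_iff_imp]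
  exact fun ⟨_, hodd⟩ ↦ rootMultiplicity_pos'.mp hodd.pos

theorem Polynomial.even_rootMultiplicity_prod_oddRootsIn_mul {R : Type*} [CommRing R] [IsDomain R]
    {P : R[X]} (hP : P ≠ 0) {s : Set R} {r : R} (hr : r ∈ s) :
    Even (((∏ x ∈ P.oddRootsIn s, (X - C x)) * P).rootMultiplicity r) := by
  classical
  have hQ : ∏ x ∈ P.oddRootsIn s, (X - C x) ≠ 0 :=
    Finset.prod_ne_zero_iff.mpr fun x _ ↦ X_sub_C_ne_zero x
  rw [rootMultiplicity_mul (mul_ne_zero hQ hP), ← count_roots, roots_prod_X_sub_C]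
  by_cases hodd : r ∈ P.oddRootsIn s
  · rw [Multiset.count_eq_one_of_mem (P.oddRootsIn s).nodup hodd]
    exact odd_one.add_odd (mem_oddRootsIn.mp hodd).2
  · rw [Multiset.count_eq_zero.mpr hodd, zero_add]
    simpa [mem_oddRootsIn, hr] using hodd

theorem intervalIntegral.integral_pos_of_nonneg_of_countable_zeros {f : ℝ → ℝ} {a b : ℝ}
    (hab : a < b) (hf : IntervalIntegrable f volume a b) (hnonneg : ∀ x ∈ Ioo a b, 0 ≤ f x)
    (hzeros : {x ∈ Ioo a b | f x = 0}.Countable) : 0 < ∫ x in a..b, f x := by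
  have hae : 0 ≤ᵐ[volume.restrict (uIoc a b)] f := by
    rw [uIoc_of_le hab.le, ← Measure.restrict_congr_set Ioo_ae_eq_Ioc]
    exact (ae_restrict_iff' measurableSet_Ioo).mpr (.of_forall hnonneg)
  refine (integral_pos_iff_support_of_nonneg_ae' hae hf).mpr ⟨hab, ?_⟩
  calc (0 : ENNReal) < volume (Ioo a b) := by simpa using hab
    _ = volume (Ioo a b \ {x ∈ Ioo a b | f x = 0}) :=
      (measure_sdiff_null (hzeros.measure_zero _)).symm
    _ ≤ volume (Function.support f ∩ Ioc a b) :=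
      measure_mono fun x ⟨hx, hfx⟩ ↦ ⟨fun h ↦ hfx ⟨hx, h⟩, Ioo_subset_Ioc_self hx⟩

theorem intervalIntegral.integral_eval_mul_eq_zero_of_natDegree_lt {w : ℝ → ℝ} {a b : ℝ}
    (hw : IntervalIntegrable w volume a b) {P : ℝ[X]} {n : ℕ}
    (horth : ∀ k < n, ∫ x in a..b, x ^ k * P.eval x * w x = 0) {Q : ℝ[X]} (hQ : Q.natDegree < n) :
    ∫ x in a..b, Q.eval x * P.eval x * w x = 0 := by
  have hint : ∀ k : ℕ, IntervalIntegrable (fun x ↦ x ^ k * P.eval x * w x) volume a b := fun k ↦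
    hw.continuousOn_mul ((continuous_pow k).mul P.continuous).continuousOn
  have hexpand : ∀ x, Q.eval x * P.eval x * w x =
      ∑ k ∈ Finset.range (Q.natDegree + 1), Q.coeff k * (x ^ k * P.eval x * w x) := fun x ↦ by
    rw [eval_eq_sum_range, Finset.sum_mul, Finset.sum_mul]
    exact Finset.sum_congr rfl fun k _ ↦ by ring
  simp only [hexpand]
  rw [integral_finsetSum fun k _ ↦ (hint k).const_mul (Q.coeff k)]
  refine Finset.sum_eq_zero fun k hk ↦ ?_
  rw [integral_const_mul, horth k (by rw [Finset.mem_range] at hk; omega), mul_zero]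

open Finset in
theorem Polynomial.le_card_oddRootsIn_of_orthogonal {a b : ℝ} (hab : a < b) {w : ℝ → ℝ}
    (hw_pos : ∀ x ∈ Ioo a b, 0 < w x) (hw_int : IntervalIntegrable w volume a b) {P : ℝ[X]}
    (hP : P ≠ 0) {n : ℕ} (horth : ∀ k < n, ∫ x in a..b, x ^ k * P.eval x * w x = 0) :
    n ≤ #(P.oddRootsIn (Ioo a b)) := by
  by_contra! hcard
  set Q := ∏ r ∈ P.oddRootsIn (Ioo a b), (X - C r)
  have hQdeg : Q.natDegree < n := by
    rwa [natDegree_prod _ _ fun r _ ↦ X_sub_C_ne_zero r,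
      sum_congr rfl fun r _ ↦ natDegree_X_sub_C r, sum_const, smul_eq_mul, mul_one]
  have hg : Q * P ≠ 0 := mul_ne_zero (prod_ne_zero_iff.mpr fun r _ ↦ X_sub_C_ne_zero r) hP
  obtain ⟨x₀, hx₀, hgx₀⟩ := exists_mem_Ioo_eval_ne_zero hg hab
  have hzero : ∫ x in a..b, (Q * P).eval x₀ * ((Q * P).eval x * w x) = 0 := by
    rw [intervalIntegral.integral_const_mul]
    simp only [eval_mul]
    rw [integral_eval_mul_eq_zero_of_natDegree_lt hw_int horth hQdeg, mul_zero]
  -- `Q * P` has the sign of `(Q * P).eval x₀` throughout `(a, b)`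
  have hpos : 0 < ∫ x in a..b, (Q * P).eval x₀ * ((Q * P).eval x * w x) := by
    refine integral_pos_of_nonneg_of_countable_zeros hab
      ((hw_int.continuousOn_mul (Q * P).continuous.continuousOn).const_mul _) (fun x hx ↦ ?_) ?_
    · rw [← mul_assoc]
      exact mul_nonneg (eval_mul_eval_nonneg_of_even_rootMultiplicity ordConnected_Ioo hg
        (fun r hr ↦ even_rootMultiplicity_prod_oddRootsIn_mul hP hr) hx₀ hx) (hw_pos x hx).le
    · refine (finite_setOfPred_isRoot hg).countable.mono fun x ⟨hx, hfx⟩ ↦ ?_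
      exact ((mul_eq_zero.mp hfx).resolve_left hgx₀ |> mul_eq_zero.mp).resolve_right
        (hw_pos x hx).ne'
  exact hpos.ne' hzero

open Finset in
theorem Polynomial.oddRootsIn_Ioo_max' {P : ℝ[X]} {a b : ℝ}
    (hne : (P.oddRootsIn (Ioo a b)).Nonempty) :
    P.oddRootsIn (Ioo a ((P.oddRootsIn (Ioo a b)).max' hne)) =
      (P.oddRootsIn (Ioo a b)).erase ((P.oddRootsIn (Ioo a b)).max' hne) := by
  set r := (P.oddRootsIn (Ioo a b)).max' hne
  have hr : r ∈ Ioo a b := (mem_oddRootsIn.mp (max'_mem _ hne)).1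
  ext x
  simp only [mem_erase, mem_oddRootsIn, Set.mem_Ioo]
  constructor
  · rintro ⟨⟨hax, hxr⟩, hodd⟩
    exact ⟨hxr.ne, ⟨hax, hxr.trans hr.2⟩, hodd⟩
  · rintro ⟨hxr, hx, hodd⟩
    exact ⟨⟨hx.1, (le_max' _ x (mem_oddRootsIn.mpr ⟨hx, hodd⟩)).lt_of_ne hxr⟩, hodd⟩

open Finset in
/-- The last conjunct, that every sign change lies below the last point, is what lets the
induction append a point beyond the largest sign change. -/
theorem Polynomial.exists_alternating_of_card_oddRootsIn {P : ℝ[X]} (hP : P ≠ 0) {a : ℝ} (n : ℕ) :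
    ∀ {b : ℝ}, a < b → #(P.oddRootsIn (Ioo a b)) = n →
      ∃ t : Fin (n + 1) → ℝ, StrictMono t ∧ (∀ i, t i ∈ Ioo a b) ∧
        (∀ i : Fin n, P.eval (t i.castSucc) * P.eval (t i.succ) < 0) ∧
        P.eval (t (Fin.last n)) ≠ 0 ∧ ∀ r ∈ P.oddRootsIn (Ioo a b), r < t (Fin.last n) := by
  induction n with
  | zero =>
    intro b hab hcard
    obtain ⟨x, hx, hPx⟩ := exists_mem_Ioo_eval_ne_zero hP hab
    refine ⟨fun _ ↦ x, Subsingleton.strictMono (α := Fin 1) _, fun _ ↦ hx, fun i ↦ i.elim0, hPx, ?_⟩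
    simp [card_eq_zero.mp hcard]
  | succ n ih =>
    intro b hab hcard
    have hne : (P.oddRootsIn (Ioo a b)).Nonempty := card_pos.mp (by omega)
    set r := (P.oddRootsIn (Ioo a b)).max' hne
    obtain ⟨hr, hr_odd⟩ := mem_oddRootsIn.mp (max'_mem _ hne)
    have hle_r : ∀ r' ∈ P.oddRootsIn (Ioo a b), r' ≤ r := fun r' hr' ↦ le_max' _ r' hr'
    obtain ⟨t, ht_mono, ht_mem, ht_alt, ht_last, ht_above⟩ := ih hr.1
      (by rw [oddRootsIn_Ioo_max', card_erase_of_mem (max'_mem _ hne), hcard]; rfl)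
    obtain ⟨y, hy, hPy⟩ := exists_mem_Ioo_eval_ne_zero hP hr.2
    have hlast_lt_y : t (Fin.last n) < y := (ht_mem _).2.trans hy.1
    have hmem : ∀ i, Fin.snoc (α := fun _ ↦ ℝ) t y i ∈ Ioo a b := Fin.lastCases
      (by simpa using ⟨hr.1.trans hy.1, hy.2⟩)
      fun i ↦ by simpa using ⟨(ht_mem i).1, (ht_mem i).2.trans hr.2⟩
    -- only `r` can be a sign change between the last point of `t` and `y`
    have hlast_alt : P.eval (t (Fin.last n)) * P.eval y < 0 := by
      refine eval_mul_eval_neg_of_odd_rootMultiplicity (ht_mem _).2 hy.1 ht_last hPy hr_odd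
        fun r' hr' hr'r ↦ Nat.not_odd_iff_even.mp fun hodd ↦ ?_
      have har' : a < r' := (ht_mem _).1.trans_le hr'.1
      have hr'_mem : r' ∈ Ioo a r :=
        ⟨har', (hle_r r' (mem_oddRootsIn.mpr ⟨⟨har', hr'.2.trans_lt hy.2⟩, hodd⟩)).lt_of_ne hr'r⟩
      exact (ht_above r' (mem_oddRootsIn.mpr ⟨hr'_mem, hodd⟩)).not_ge hr'.1
    refine ⟨Fin.snoc (α := fun _ ↦ ℝ) t y, Fin.strictMono_iff_lt_succ.mpr ?_, hmem, ?_, ?_, ?_⟩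
    · refine Fin.lastCases ?_ fun i ↦ ?_
      · simpa using hlast_lt_y
      · rw [Fin.succ_castSucc, Fin.snoc_castSucc, Fin.snoc_castSucc]
        exact ht_mono i.castSucc_lt_succ
    · refine Fin.lastCases ?_ fun i ↦ ?_
      · simpa using hlast_alt
      · rw [Fin.succ_castSucc, Fin.snoc_castSucc, Fin.snoc_castSucc]
        exact ht_alt i
    · simpa using hPy
    · intro r' hr'
      simpa using (hle_r r' hr').trans_lt hy.1

open Finset in
theorem Polynomial.exists_alternating_of_le_card_oddRootsIn {P : ℝ[X]} (hP : P ≠ 0) {a b : ℝ}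
    (hab : a < b) {n : ℕ} (hn : n ≤ #(P.oddRootsIn (Ioo a b))) :
    ∃ t : Fin (n + 1) → ℝ, StrictMono t ∧ (∀ i, t i ∈ Ioo a b) ∧
      ∀ i : Fin n, P.eval (t i.castSucc) * P.eval (t i.succ) < 0 := by
  obtain ⟨t, ht_mono, ht_mem, ht_alt, -⟩ := exists_alternating_of_card_oddRootsIn hP _ hab rfl
  exact ⟨t ∘ Fin.castLE (by omega), ht_mono.comp (Fin.strictMono_castLE _), fun i ↦ ht_mem _,
    fun i ↦ ht_alt (Fin.castLE hn i)⟩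

open Finset in
/-- The `n + m` sign changes in `s ∪ t` exhaust the degree, so they are all the roots of `P` and
all are simple. -/
theorem Polynomial.exists_simple_roots_of_natDegree_eq {P : ℝ[X]} (hP : P ≠ 0) {s t : Set ℝ}
    (hst : Disjoint s t) {n m : ℕ} (hn : n ≤ #(P.oddRootsIn s)) (hm : m ≤ #(P.oddRootsIn t))
    (hdeg : P.natDegree = n + m) :
    ∃ S : Finset ℝ, #S = n ∧ (↑S : Set ℝ) ⊆ s ∧ (∀ x ∈ s, P.eval x = 0 ↔ x ∈ S) ∧
      ∀ x ∈ S, (derivative P).eval x ≠ 0 := by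
  classical
  have hdisj : Disjoint (P.oddRootsIn s) (P.oddRootsIn t) := disjoint_left.mpr fun x hs ht ↦
    hst.notMem_of_mem_left (mem_oddRootsIn.mp hs).1 (mem_oddRootsIn.mp ht).1
  have hroot : ∀ x ∈ P.oddRootsIn s ∪ P.oddRootsIn t, P.IsRoot x := fun x hx ↦ by
    rcases mem_union.mp hx with hx | hx <;>
      exact (rootMultiplicity_pos hP).mp (mem_oddRootsIn.mp hx).2.pos
  have hcard : #(P.oddRootsIn s ∪ P.oddRootsIn t) ≤ P.natDegree := by
    refine (card_le_card fun x hx ↦ ?_).trans ((Multiset.toFinset_card_le _).trans P.card_roots')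
    exact Multiset.mem_toFinset.mpr ((mem_roots hP).mpr (hroot x hx))
  rw [card_union_of_disjoint hdisj] at hcard
  have hsimple := fun x ↦ mem_and_rootMultiplicity_eq_one_of_natDegree_le_card hP hroot
    (by rw [card_union_of_disjoint hdisj]; omega) (r := x)
  refine ⟨P.oddRootsIn s, by omega, fun x hx ↦ (mem_oddRootsIn.mp hx).1, fun x hx ↦ ⟨fun hPx ↦ ?_,
    fun hxS ↦ hroot x (mem_union_left _ hxS)⟩, fun x hxS hP'x ↦ ?_⟩
  · refine (mem_union.mp (hsimple x hPx).1).resolve_right fun hxt ↦ ?_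
    exact hst.notMem_of_mem_left hx (mem_oddRootsIn.mp hxt).1
  · have hmult := (hsimple x (hroot x (mem_union_left _ hxS))).2
    have := (one_lt_rootMultiplicity_iff_isRoot hP).mpr ⟨hroot x (mem_union_left _ hxS), hP'x⟩
    omega

theorem angelesco_localization_general
    (a : ℝ) (ha : a < 0) (n m : ℕ) (w₁ w₂ : ℝ → ℝ)
    (hw₁_pos : ∀ x ∈ Set.Ioo a 0, 0 < w₁ x)
    (hw₂_pos : ∀ x ∈ Set.Ioo (0 : ℝ) 1, 0 < w₂ x)
    (hw₁_int : IntervalIntegrable w₁ MeasureTheory.volume a 0)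
    (hw₂_int : IntervalIntegrable w₂ MeasureTheory.volume 0 1)
    (P : Polynomial ℝ) (hP : P ≠ 0)
    (horth₁ : ∀ k < n, ∫ x in a..0, x ^ k * P.eval x * w₁ x = 0)
    (horth₂ : ∀ k < m, ∫ x in (0 : ℝ)..1, x ^ k * P.eval x * w₂ x = 0) :
    (∃ t : Fin (n + 1) → ℝ, StrictMono t ∧ (∀ i, t i ∈ Set.Ioo a 0) ∧
      ∀ i : Fin n, P.eval (t i.castSucc) * P.eval (t i.succ) < 0) ∧
    (∃ t : Fin (m + 1) → ℝ, StrictMono t ∧ (∀ i, t i ∈ Set.Ioo (0 : ℝ) 1) ∧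
      ∀ i : Fin m, P.eval (t i.castSucc) * P.eval (t i.succ) < 0) ∧
    (P.natDegree = n + m →
      (∃ S : Finset ℝ, S.card = n ∧ (↑S : Set ℝ) ⊆ Set.Ioo a 0 ∧
        (∀ x ∈ Set.Ioo a 0, P.eval x = 0 ↔ x ∈ S) ∧
        ∀ x ∈ S, (Polynomial.derivative P).eval x ≠ 0) ∧
      (∃ S : Finset ℝ, S.card = m ∧ (↑S : Set ℝ) ⊆ Set.Ioo (0 : ℝ) 1 ∧
        (∀ x ∈ Set.Ioo (0 : ℝ) 1, P.eval x = 0 ↔ x ∈ S) ∧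
        ∀ x ∈ S, (Polynomial.derivative P).eval x ≠ 0)) := by
  have h₁ := le_card_oddRootsIn_of_orthogonal ha hw₁_pos hw₁_int hP horth₁
  have h₂ := le_card_oddRootsIn_of_orthogonal one_pos hw₂_pos hw₂_int hP horth₂
  have hdisj : Disjoint (Ioo a 0) (Ioo (0 : ℝ) 1) := Ioo_disjoint_Ioo.mpr (by simp [ha.le])
  exact ⟨exists_alternating_of_le_card_oddRootsIn hP ha h₁,
    exists_alternating_of_le_card_oddRootsIn hP one_pos h₂, fun hdeg ↦
      ⟨exists_simple_roots_of_natDegree_eq hP hdisj h₁ h₂ hdeg,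
        exists_simple_roots_of_natDegree_eq hP hdisj.symm h₂ h₁ (by omega)⟩⟩

/-- Angelesco localization: a type II multiple orthogonal polynomial for two
weights on `(a,0)` and `(0,1)` has at least `n` sign changes in `(a,0)` and at
least `m` sign changes in `(0,1)`; if its degree is exactly `n + m`, it has
exactly `n` simple zeros in `(a,0)` and exactly `m` simple zeros in `(0,1)`. -/
theorem angelesco_localization
    (a : ℝ) (ha : a < 0) (n m : ℕ) (w₁ w₂ : ℝ → ℝ)
    (hw₁_cont : ContinuousOn w₁ (Set.Ioo a 0)) (hw₁_pos : ∀ x ∈ Set.Ioo a 0, 0 < w₁ x)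
    (hw₂_cont : ContinuousOn w₂ (Set.Ioo (0 : ℝ) 1)) (hw₂_pos : ∀ x ∈ Set.Ioo (0 : ℝ) 1, 0 < w₂ x)
    (hw₁_int : IntervalIntegrable w₁ MeasureTheory.volume a 0)
    (hw₂_int : IntervalIntegrable w₂ MeasureTheory.volume 0 1)
    (P : Polynomial ℝ) (hP : P ≠ 0) (hPdeg : P.natDegree ≤ n + m)
    (horth₁ : ∀ k < n, ∫ x in a..0, x ^ k * P.eval x * w₁ x = 0)
    (horth₂ : ∀ k < m, ∫ x in (0 : ℝ)..1, x ^ k * P.eval x * w₂ x = 0) :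
    (∃ t : Fin (n + 1) → ℝ, StrictMono t ∧ (∀ i, t i ∈ Set.Ioo a 0) ∧
      ∀ i : Fin n, P.eval (t i.castSucc) * P.eval (t i.succ) < 0) ∧
    (∃ t : Fin (m + 1) → ℝ, StrictMono t ∧ (∀ i, t i ∈ Set.Ioo (0 : ℝ) 1) ∧
      ∀ i : Fin m, P.eval (t i.castSucc) * P.eval (t i.succ) < 0) ∧
    (P.natDegree = n + m →
      (∃ S : Finset ℝ, S.card = n ∧ (↑S : Set ℝ) ⊆ Set.Ioo a 0 ∧
        (∀ x ∈ Set.Ioo a 0, P.eval x = 0 ↔ x ∈ S) ∧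
        ∀ x ∈ S, (Polynomial.derivative P).eval x ≠ 0) ∧
      (∃ S : Finset ℝ, S.card = m ∧ (↑S : Set ℝ) ⊆ Set.Ioo (0 : ℝ) 1 ∧
        (∀ x ∈ Set.Ioo (0 : ℝ) 1, P.eval x = 0 ↔ x ∈ S) ∧
        ∀ x ∈ S, (Polynomial.derivative P).eval x ≠ 0)) :=
  angelesco_localization_general a ha n m w₁ w₂ hw₁_pos hw₂_pos hw₁_int hw₂_int P hP horth₁ horth₂
end

section
/- Let $a < 0$, $A, B, C > 0$, let $y_1 < \cdots < y_k$ lie in $(a,0)$ and $y_{k+1} < \cdots < y_m$ lie in $(0,1)$, and let $x_1 < \cdots < x_{m+2}$ be the zeros (one per component) of $f(x) = \sum_{j=1}^m 1/(x - y_j) + A/(x-a) + B/x - C/(1-x)$ in $(a,1)\setminus\{y_1,\ldots,y_m,0\}$. Then the zeros interlace with the poles: $a < x_1 < y_1 < x_2 < \cdots < y_k < x_{k+1} < 0 < x_{k+2} < y_{k+1} < \cdots < y_m < x_{m+2} < 1$. -/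
open Finset Set

/-- `1/·` reverses order on an interval avoiding `0`. -/
lemma ja_one_div_lt {s t : ℝ} (h : s < t) (hst : 0 < s ∨ t < 0) : 1 / t < 1 / s := by
  rcases hst with hs | ht
  · exact one_div_lt_one_div_of_lt hs h
  · have hs : s < 0 := h.trans ht
    have hs0 : s ≠ 0 := ne_of_lt hs
    have ht0 : t ≠ 0 := ne_of_lt ht
    have hts : 0 < t * s := mul_pos_of_neg_of_neg ht hs
    have key : 1 / t - 1 / s = (s - t) / (t * s) := by
      rw [div_sub_div _ _ ht0 hs0]; ring_nf
    have : (s - t) / (t * s) < 0 := div_neg_of_neg_of_pos (by linarith) hts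
    linarith

lemma ja_div_le (c : ℝ) (hc : 0 ≤ c) {s t : ℝ} (h : s < t) (hst : 0 < s ∨ t < 0) :
    c / t ≤ c / s := by
  rw [div_eq_mul_one_div c t, div_eq_mul_one_div c s]
  exact mul_le_mul_of_nonneg_left (ja_one_div_lt h hst).le hc

lemma ja_div_lt {c : ℝ} (hc : 0 < c) {s t : ℝ} (h : s < t) (hst : 0 < s ∨ t < 0) :
    c / t < c / s := by
  rw [div_eq_mul_one_div c t, div_eq_mul_one_div c s]
  exact mul_lt_mul_of_pos_left (ja_one_div_lt h hst) hc

/-- The sequence of poles `a, y₀, …, y_{k-1}, 0, y_k, …, y_{m-1}, 1` (indices `0 … m+2`). -/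
def jaPole (a : ℝ) (m k : ℕ) (Y : ℕ → ℝ) : ℕ → ℝ := fun i =>
  if i = 0 then a
  else if i ≤ k then Y (i - 1)
  else if i = k + 1 then 0
  else if i ≤ m + 1 then Y (i - 2)
  else 1

/-- Interlacing of the zeros of the rational function `f` with its poles
`y₁ < ⋯ < y_k < 0 < y_{k+1} < ⋯ < y_m`:
`a < x₁ < y₁ < x₂ < ⋯ < y_k < x_{k+1} < 0 < x_{k+2} < y_{k+1} < ⋯ < y_m < x_{m+2} < 1`. -/
theorem jacobi_angelesco_zeros_interlace
    (a A B C : ℝ) (ha : a < 0) (hA : 0 < A) (hB : 0 < B) (hC : 0 < C)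
    (m k : ℕ) (hk : k ≤ m) (y : Fin m → ℝ) (hy : StrictMono y)
    (hneg : ∀ j : Fin m, (j : ℕ) < k → y j ∈ Set.Ioo a 0)
    (hpos : ∀ j : Fin m, k ≤ (j : ℕ) → y j ∈ Set.Ioo (0 : ℝ) 1)
    (x : Fin (m + 2) → ℝ) (hx : StrictMono x)
    (hxdom : ∀ i, x i ∈ Set.Ioo a 1 ∧ x i ≠ 0 ∧ ∀ j, x i ≠ y j)
    (hxzero : ∀ i, (∑ j, 1 / (x i - y j)) + A / (x i - a) + B / (x i) - C / (1 - x i) = 0) :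
    (∀ j : Fin m, ∀ hj : (j : ℕ) < k,
      x ⟨(j : ℕ), by omega⟩ < y j ∧ y j < x ⟨(j : ℕ) + 1, by omega⟩) ∧
    x ⟨k, by omega⟩ < 0 ∧ 0 < x ⟨k + 1, by omega⟩ ∧
    (∀ j : Fin m, k ≤ (j : ℕ) →
      x ⟨(j : ℕ) + 1, by have := j.isLt; omega⟩ < y j ∧
        y j < x ⟨(j : ℕ) + 2, by have := j.isLt; omega⟩) := by
  classical
  set Y : ℕ → ℝ := fun n => if h : n < m then y ⟨n, h⟩ else 0 with hYdef
  have hYval : ∀ (j : Fin m), Y (j : ℕ) = y j := by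
    intro j; simp [hYdef, j.isLt]
  have hYmono : ∀ n n', n < n' → n' < m → Y n < Y n' := by
    intro n n' h h'
    have hn : n < m := by omega
    simp only [hYdef, dif_pos hn, dif_pos h']
    exact hy (by simpa [Fin.lt_def] using h)
  have hnegY : ∀ n, n < k → Y n ∈ Set.Ioo a 0 := by
    intro n hn
    have hn' : n < m := by omega
    simp only [hYdef, dif_pos hn']
    exact hneg ⟨n, hn'⟩ hn
  have hposY : ∀ n, k ≤ n → n < m → Y n ∈ Set.Ioo (0 : ℝ) 1 := by
    intro n hn hn'
    simp only [hYdef, dif_pos hn']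
    exact hpos ⟨n, hn'⟩ hn
  set p : ℕ → ℝ := jaPole a m k Y with hpdef
  -- value lemmas
  have hp0 : p 0 = a := by simp [hpdef, jaPole]
  have hplast : p (m + 2) = 1 := by
    simp only [hpdef, jaPole]
    rw [if_neg (by omega), if_neg (by omega), if_neg (by omega), if_neg (by omega)]
  have hpk1 : p (k + 1) = 0 := by
    simp only [hpdef, jaPole]
    rw [if_neg (by omega), if_neg (by omega)]
    simp
  have hpy1 : ∀ i, 1 ≤ i → i ≤ k → p i = Y (i - 1) := by
    intro i h1 h2
    simp only [hpdef, jaPole]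
    rw [if_neg (by omega), if_pos h2]
  have hpy2 : ∀ i, k + 2 ≤ i → i ≤ m + 1 → p i = Y (i - 2) := by
    intro i h1 h2
    simp only [hpdef, jaPole]
    rw [if_neg (by omega), if_neg (by omega), if_neg (by omega), if_pos h2]
  -- strict monotonicity of p
  have hstep : ∀ i, i < m + 2 → p i < p (i + 1) := by
    intro i hi
    rcases Nat.eq_zero_or_pos i with h0 | h0
    · subst h0
      by_cases hk0 : k = 0
      · have : p 1 = 0 := by rw [← hpk1, hk0]
        rw [hp0, this]; exact ha
      · rw [hp0, hpy1 1 le_rfl (by omega)]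
        exact (hnegY 0 (by omega)).1
    · by_cases h1 : i + 1 ≤ k
      · rw [hpy1 i (by omega) (by omega), hpy1 (i + 1) (by omega) h1]
        have : i + 1 - 1 < m := by omega
        exact hYmono (i - 1) (i + 1 - 1) (by omega) (by omega)
      · by_cases h2 : i = k
        · have e : i + 1 = k + 1 := by omega
          rw [hpy1 i (by omega) (by omega), e, hpk1]
          exact (hnegY (i - 1) (by omega)).2
        · by_cases h3 : i = k + 1
          · subst h3
            by_cases h4 : k = m
            · have : k + 1 + 1 = m + 2 := by omega
              rw [hpk1, this, hplast]; norm_num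
            · rw [hpk1, hpy2 (k + 2) le_rfl (by omega)]
              exact (hposY k le_rfl (by omega)).1
          · by_cases h4 : i + 1 ≤ m + 1
            · rw [hpy2 i (by omega) (by omega), hpy2 (i + 1) (by omega) h4]
              exact hYmono (i - 2) (i + 1 - 2) (by omega) (by omega)
            · have h5 : i = m + 1 := by omega
              subst h5
              rw [hpy2 (m + 1) (by omega) le_rfl, hplast]
              exact (hposY (m + 1 - 2) (by omega) (by omega)).2
  have hmono : ∀ i j, i ≤ j → j ≤ m + 2 → p i ≤ p j := by
    intro i j hij hj
    induction j with
    | zero => have : i = 0 := by omega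
              simp [this]
    | succ n ih =>
      rcases Nat.lt_or_ge i (n + 1) with h | h
      · exact (ih (by omega) (by omega)).trans (hstep n (by omega)).le
      · have : i = n + 1 := by omega
        simp [this]
  have hsmono : ∀ i j, i < j → j ≤ m + 2 → p i < p j := by
    intro i j hij hj
    exact lt_of_lt_of_le (hstep i (by omega)) (hmono (i + 1) j (by omega) hj)
  -- facts about x
  have hxa : ∀ i, a < x i := fun i => (hxdom i).1.1
  have hx1 : ∀ i, x i < 1 := fun i => (hxdom i).1.2
  have hx0 : ∀ i, x i ≠ 0 := fun i => (hxdom i).2.1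
  have hxyY : ∀ i n, n < m → x i ≠ Y n := by
    intro i n hn
    simp only [hYdef, dif_pos hn]
    exact (hxdom i).2.2 ⟨n, hn⟩
  have hne : ∀ (i : Fin (m + 2)) t, t ≤ m + 1 → x i ≠ p t := by
    intro i t ht
    rcases Nat.eq_zero_or_pos t with h0 | h0
    · subst h0; rw [hp0]; exact (hxa i).ne'
    · by_cases h1 : t ≤ k
      · rw [hpy1 t h0 h1]; exact hxyY i (t - 1) (by omega)
      · by_cases h2 : t = k + 1
        · rw [h2, hpk1]; exact hx0 i
        · rw [hpy2 t (by omega) ht]; exact hxyY i (t - 2) (by omega)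
  -- strict decrease of f on pole-free intervals
  have hanti : ∀ u v : ℝ, a < u → u < v → v < 1 →
      (u < 0 ∧ v < 0 ∨ 0 < u ∧ 0 < v) →
      (∀ j : Fin m, v < y j ∨ y j < u) →
      (∑ j, 1 / (v - y j)) + A / (v - a) + B / v - C / (1 - v) <
      (∑ j, 1 / (u - y j)) + A / (u - a) + B / u - C / (1 - u) := by
    intro u v hau huv hv1 h0 hyj
    have h1 : ∑ j, 1 / (v - y j) ≤ ∑ j, 1 / (u - y j) := by
      apply Finset.sum_le_sum
      intro j _
      refine (ja_one_div_lt (by linarith) ?_).le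
      rcases hyj j with hj | hj
      · exact Or.inr (by linarith)
      · exact Or.inl (by linarith)
    have h2 : A / (v - a) < A / (u - a) := ja_div_lt hA (by linarith) (Or.inl (by linarith))
    have h3 : B / v ≤ B / u := by
      refine ja_div_le B hB.le huv ?_
      rcases h0 with ⟨h0u, h0v⟩ | ⟨h0u, h0v⟩
      · exact Or.inr h0v
      · exact Or.inl h0u
    have h4 : C / (1 - u) ≤ C / (1 - v) := ja_div_le C hC.le (by linarith) (Or.inl (by linarith))
    linarith
  -- assign each zero to its interval
  have hSne : ∀ i : Fin (m + 2),
      ((Finset.range (m + 2)).filter (fun t => p t < x i)).Nonempty := by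
    intro i
    exact ⟨0, by simp [Finset.mem_filter, hp0, hxa i]⟩
  set g : Fin (m + 2) → ℕ :=
    fun i => (((Finset.range (m + 2)).filter (fun t => p t < x i))).max' (hSne i) with hgdef
  have hgmem : ∀ i, g i ∈ (Finset.range (m + 2)).filter (fun t => p t < x i) :=
    fun i => Finset.max'_mem _ (hSne i)
  have hglt : ∀ i, g i < m + 2 := by
    intro i
    have := hgmem i
    simp only [Finset.mem_filter, Finset.mem_range] at this
    exact this.1
  have hgp : ∀ i, p (g i) < x i := by
    intro i
    have := hgmem i
    simp only [Finset.mem_filter, Finset.mem_range] at this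
    exact this.2
  have hgp' : ∀ i, x i < p (g i + 1) := by
    intro i
    by_cases h : g i + 1 = m + 2
    · rw [h, hplast]; exact hx1 i
    · have hle : g i + 1 ≤ m + 1 := by have := hglt i; omega
      have hnlt : ¬ (p (g i + 1) < x i) := by
        intro hlt
        have : g i + 1 ≤ g i := Finset.le_max' _ _ (by
          simp only [Finset.mem_filter, Finset.mem_range]
          exact ⟨by omega, hlt⟩)
        omega
      exact lt_of_le_of_ne (not_lt.mp hnlt) (hne i (g i + 1) hle)
  -- each y j is a pole with a known index
  have hyidx : ∀ j : Fin m, ∃ s, 1 ≤ s ∧ s ≤ m + 1 ∧ p s = y j := by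
    intro j
    by_cases hj : (j : ℕ) < k
    · refine ⟨(j : ℕ) + 1, by omega, by omega, ?_⟩
      rw [hpy1 _ (by omega) (by omega)]
      simpa using hYval j
    · refine ⟨(j : ℕ) + 2, by omega, by have := j.isLt; omega, ?_⟩
      rw [hpy2 _ (by omega) (by have := j.isLt; omega)]
      simpa using hYval j
  -- g is strictly monotone, hence the identity
  have hginj : ∀ (i i' : Fin (m + 2)), i < i' → g i < g i' := by
    intro i i' hii
    have hle : g i ≤ g i' := by
      apply Finset.le_max'
      simp only [Finset.mem_filter, Finset.mem_range]
      exact ⟨hglt i, (hgp i).trans (hx hii)⟩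
    rcases lt_or_eq_of_le hle with h | h
    · exact h
    · exfalso
      -- x i and x i' lie in the same interval (p t, p (t+1)) with t = g i
      have hpi' : x i' < p (g i + 1) := by rw [h]; exact hgp' i'
      have h0 : x i < 0 ∧ x i' < 0 ∨ 0 < x i ∧ 0 < x i' := by
        rcases Nat.lt_or_ge (g i) (k + 1) with hc | hc
        · left
          have : p (g i + 1) ≤ p (k + 1) := hmono _ _ (by omega) (by omega)
          rw [hpk1] at this
          constructor
          · linarith [hgp' i]
          · linarith
        · right
          have : p (k + 1) ≤ p (g i) := hmono _ _ (by omega) (by have := hglt i; omega)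
          rw [hpk1] at this
          constructor
          · linarith [hgp i]
          · linarith [hgp i, hx hii]
      have hyj : ∀ j : Fin m, x i' < y j ∨ y j < x i := by
        intro j
        obtain ⟨s, hs1, hs2, hs3⟩ := hyidx j
        rcases Nat.lt_or_ge (g i) s with hc | hc
        · left
          have : p (g i + 1) ≤ p s := hmono _ _ (by omega) (by omega)
          rw [hs3] at this
          linarith
        · right
          have : p s ≤ p (g i) := hmono _ _ hc (by have := hglt i; omega)
          rw [hs3] at this
          linarith [hgp i]
      have := hanti (x i) (x i') (hxa i) (hx hii) (hx1 i') h0 hyj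
      rw [hxzero i, hxzero i'] at this
      exact lt_irrefl 0 this
  have hG : ∀ i : Fin (m + 2), g i = (i : ℕ) := by
    have hGs : StrictMono (fun i : Fin (m + 2) => (⟨g i, hglt i⟩ : Fin (m + 2))) := by
      intro i i' h
      simpa [Fin.lt_def] using hginj i i' h
    have hsurj : Function.Surjective (fun i : Fin (m + 2) => (⟨g i, hglt i⟩ : Fin (m + 2))) :=
      Finite.surjective_of_injective hGs.injective
    have hrange : Set.range (fun i : Fin (m + 2) => (⟨g i, hglt i⟩ : Fin (m + 2)))
        = Set.range (id : Fin (m + 2) → Fin (m + 2)) := by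
      rw [Set.range_id, Set.range_eq_univ.mpr hsurj]
    haveI : WellFoundedLT (Fin (m + 2)) := Finite.to_wellFoundedLT
    have := (hGs.range_inj strictMono_id).1 hrange
    intro i
    have := congrFun this i
    simpa [Fin.ext_iff] using this
  -- main interval claim
  have claim : ∀ i : Fin (m + 2), p (i : ℕ) < x i ∧ x i < p ((i : ℕ) + 1) := by
    intro i
    constructor
    · have := hgp i; rwa [hG i] at this
    · have := hgp' i; rwa [hG i] at this
  -- conclude
  refine ⟨?_, ?_, ?_, ?_⟩
  · intro j hj
    have hj1 : p ((j : ℕ) + 1) = y j := by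
      rw [hpy1 _ (by omega) (by omega)]
      simpa using hYval j
    constructor
    · have := (claim ⟨(j : ℕ), by omega⟩).2
      simpa [hj1] using this
    · have := (claim ⟨(j : ℕ) + 1, by omega⟩).1
      simpa [hj1] using this
  · have := (claim ⟨k, by omega⟩).2
    simp only at this
    rwa [hpk1] at this
  · have := (claim ⟨k + 1, by omega⟩).1
    simp only at this
    rwa [hpk1] at this
  · intro j hj
    have hj2 : p ((j : ℕ) + 2) = y j := by
      rw [hpy2 _ (by omega) (by have := j.isLt; omega)]
      simpa using hYval j
    constructor
    · have := (claim ⟨(j : ℕ) + 1, by have := j.isLt; omega⟩).2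
      simpa [hj2] using this
    · have := (claim ⟨(j : ℕ) + 2, by have := j.isLt; omega⟩).1
      simpa [hj2] using this
end
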